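/- Let X be a normed space, C ⊆ X convex, T, U : C → C nonexpansive with common fixed point p, and define the alternating Halpern-Mann iteration y_n = (1-α_n) T x_n + α_n u, x_{n+1} = (1-β_n) U y_n + β_n y_n with (α_n), (β_n) ⊆ [0,1]. Assume: α_n → 0, Σ α_n = ∞, Σ |α_{n+1} - α_n| < ∞, and Σ |β_{n+1} - β_n| < ∞. Then lim ‖x_{n+1} - x_n‖ = 0 and lim ‖y_{n+1} - y_n‖ = 0. -/

import Mathlib

/-!
Since `p` is a common fixed point, the convex set `C ∩ closedBall p r` with
`r = max ‖x 0 - p‖ ‖u - p‖` is invariant under `T` and `U`, so every iterate stays in a set of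
diameter `M = 2 r`. Comparing two consecutive Halpern steps and two consecutive Mann steps there
gives the recursion
`‖x (n+2) - x (n+1)‖ ≤ (1 - α (n+1)) ‖x (n+1) - x n‖ + (|α (n+1) - α n| + |β (n+1) - β n|) M`,
which Xu's lemma turns into `‖x (n+1) - x n‖ → 0` because `∑ α = ∞`; the Halpern comparison
then also bounds `‖y (n+1) - y n‖`.
-/

open Filter Finset Set Metric Real Topology

section Xu

variable {a t c : ℕ → ℝ}

theorem le_exp_neg_sum_mul_add_sum_of_succ_le (ha : ∀ n, 0 ≤ a n) (ht0 : ∀ n, 0 ≤ t n)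
    (ht1 : ∀ n, t n ≤ 1) (hc : ∀ n, 0 ≤ c n)
    (hrec : ∀ n, a (n + 1) ≤ (1 - t n) * a n + c n) {N m : ℕ} (hNm : N ≤ m) :
    a m ≤ exp (-∑ k ∈ Ico N m, t k) * a N + ∑ k ∈ Ico N m, c k := by
  induction m, hNm using Nat.le_induction with
  | base => simp
  | succ m hNm ih =>
    have hE : 0 ≤ exp (-∑ k ∈ Ico N m, t k) * a N := mul_nonneg (exp_nonneg _) (ha N)
    have hS : 0 ≤ ∑ k ∈ Ico N m, c k := sum_nonneg fun k _ => hc k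
    rw [sum_Ico_succ_top hNm, sum_Ico_succ_top hNm, neg_add, exp_add]
    calc a (m + 1)
        ≤ (1 - t m) * (exp (-∑ k ∈ Ico N m, t k) * a N + ∑ k ∈ Ico N m, c k) + c m :=
          (hrec m).trans (by gcongr; linarith [ht1 m])
      _ ≤ exp (-t m) * (exp (-∑ k ∈ Ico N m, t k) * a N) + (∑ k ∈ Ico N m, c k + c m) := by
          nlinarith [one_sub_le_exp_neg (t m), ht0 m]
      _ = _ := by ring

/-- Xu's lemma. -/
theorem tendsto_zero_of_succ_le_one_sub_mul_add (ha : ∀ n, 0 ≤ a n) (ht0 : ∀ n, 0 ≤ t n)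
    (ht1 : ∀ n, t n ≤ 1) (ht : ¬ Summable t) (hc0 : ∀ n, 0 ≤ c n) (hc : Summable c)
    (hrec : ∀ n, a (n + 1) ≤ (1 - t n) * a n + c n) :
    Tendsto a atTop (𝓝 0) := by
  have htail : Tendsto (fun N => ∑' k, c k - ∑ k ∈ range N, c k) atTop (𝓝 0) := by
    simpa using hc.tendsto_sum_tsum_nat.const_sub (∑' k, c k)
  have hsum : Tendsto (fun m => ∑ k ∈ range m, t k) atTop atTop :=
    (not_summable_iff_tendsto_nat_atTop_of_nonneg ht0).1 ht
  rw [Metric.tendsto_atTop]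
  intro ε hε
  obtain ⟨N, hN⟩ := (htail.eventually (gt_mem_nhds (half_pos hε))).exists
  have hexp : Tendsto (fun m => exp (-∑ k ∈ Ico N m, t k) * a N) atTop (𝓝 0) := by
    have hIco : Tendsto (fun m => ∑ k ∈ Ico N m, t k) atTop atTop := by
      refine (tendsto_atTop_add_const_right _ (-∑ k ∈ range N, t k) hsum).congr' ?_
      filter_upwards [eventually_ge_atTop N] with m hm
      rw [sum_Ico_eq_sub _ hm, sub_eq_add_neg]
    simpa using (tendsto_exp_atBot.comp (tendsto_neg_atTop_atBot.comp hIco)).mul_const (a N)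
  obtain ⟨N', hN'⟩ := eventually_atTop.1 (hexp.eventually (gt_mem_nhds (half_pos hε)))
  refine ⟨max N N', fun m hm => ?_⟩
  have hNm : N ≤ m := le_of_max_le_left hm
  have hIco : ∑ k ∈ Ico N m, c k ≤ ∑' k, c k - ∑ k ∈ range N, c k := by
    rw [sum_Ico_eq_sub _ hNm]
    linarith [hc.sum_le_tsum (range m) fun k _ => hc0 k]
  rw [Real.dist_0_eq_abs, abs_of_nonneg (ha m)]
  linarith [le_exp_neg_sum_mul_add_sum_of_succ_le ha ht0 ht1 hc0 hrec hNm,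
    hN' m (le_of_max_le_right hm)]

end Xu

theorem LipschitzOnWith.mapsTo_inter_closedBall {α : Type*} [PseudoMetricSpace α] {f : α → α}
    {s : Set α} (hf : LipschitzOnWith 1 f s) (hfs : MapsTo f s s) {p : α} (hp : p ∈ s)
    (hfp : f p = p) (r : ℝ) : MapsTo f (s ∩ closedBall p r) (s ∩ closedBall p r) :=
  fun z ⟨hz, hzr⟩ => ⟨hfs hz, by
    simpa [mem_closedBall, hfp] using (hf.dist_le_mul z hz p hp).trans (by simpa using hzr)⟩

section Combination

variable {E : Type*} [SeminormedAddCommGroup E] [NormedSpace ℝ E] {s s' D M : ℝ}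

theorem norm_combo_sub_combo_le (hs' : s' ∈ Icc (0 : ℝ) 1) (v w v' w' : E) :
    ‖((1 - s') • v' + s' • w') - ((1 - s) • v + s • w)‖ ≤
      (1 - s') * ‖v' - v‖ + s' * ‖w' - w‖ + |s' - s| * ‖w - v‖ := by
  have h : ((1 - s') • v' + s' • w') - ((1 - s) • v + s • w) =
      (1 - s') • (v' - v) + s' • (w' - w) + (s' - s) • (w - v) := by module
  rw [h]
  refine (norm_add₃_le ..).trans_eq ?_
  rw [norm_smul_of_nonneg (sub_nonneg.2 hs'.2), norm_smul_of_nonneg hs'.1, norm_smul,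
    Real.norm_eq_abs]

theorem norm_halpern_sub_halpern_le (hs' : s' ∈ Icc (0 : ℝ) 1) {v v' u : E}
    (hv : ‖v' - v‖ ≤ D) (hM : ‖u - v‖ ≤ M) :
    ‖((1 - s') • v' + s' • u) - ((1 - s) • v + s • u)‖ ≤ (1 - s') * D + |s' - s| * M :=
  calc _ ≤ (1 - s') * ‖v' - v‖ + s' * ‖u - u‖ + |s' - s| * ‖u - v‖ :=
        norm_combo_sub_combo_le hs' v u v' u
    _ ≤ (1 - s') * D + |s' - s| * M := by
        rw [sub_self, norm_zero, mul_zero, add_zero]; gcongr; linarith [hs'.2]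

theorem norm_mann_sub_mann_le (hs' : s' ∈ Icc (0 : ℝ) 1) {v w v' w' : E}
    (hv : ‖v' - v‖ ≤ ‖w' - w‖) (hM : ‖w - v‖ ≤ M) :
    ‖((1 - s') • v' + s' • w') - ((1 - s) • v + s • w)‖ ≤ ‖w' - w‖ + |s' - s| * M :=
  calc _ ≤ (1 - s') * ‖v' - v‖ + s' * ‖w' - w‖ + |s' - s| * ‖w - v‖ :=
        norm_combo_sub_combo_le hs' v w v' w'
    _ ≤ (1 - s') * ‖w' - w‖ + s' * ‖w' - w‖ + |s' - s| * M := by gcongr; linarith [hs'.2]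
    _ = ‖w' - w‖ + |s' - s| * M := by ring

end Combination

section HalpernMann

variable {X : Type*} [NormedAddCommGroup X] [NormedSpace ℝ X] {K : Set X} {T U : X → X} {u : X}
  {α β : ℕ → ℝ} {x y : ℕ → X}

theorem halpernMann_mem (hK : Convex ℝ K) (hTK : MapsTo T K K) (hUK : MapsTo U K K)
    (hu : u ∈ K) (hα : ∀ n, α n ∈ Icc (0 : ℝ) 1) (hβ : ∀ n, β n ∈ Icc (0 : ℝ) 1)
    (hx0 : x 0 ∈ K) (hy : ∀ n, y n = (1 - α n) • T (x n) + α n • u)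
    (hx : ∀ n, x (n + 1) = (1 - β n) • U (y n) + β n • y n) (n : ℕ) :
    x n ∈ K ∧ y n ∈ K := by
  have hyK : ∀ n, x n ∈ K → y n ∈ K := fun n hxn => by
    rw [hy]
    exact hK (hTK hxn) hu (sub_nonneg.2 (hα n).2) (hα n).1 (sub_add_cancel 1 _)
  induction n with
  | zero => exact ⟨hx0, hyK 0 hx0⟩
  | succ n ih =>
    have hxn : x (n + 1) ∈ K := by
      rw [hx]
      exact hK (hUK ih.2) ih.2 (sub_nonneg.2 (hβ n).2) (hβ n).1 (sub_add_cancel 1 _)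
    exact ⟨hxn, hyK _ hxn⟩

theorem halpernMann_tendsto_norm_succ_sub (hK : Convex ℝ K) {M : ℝ}
    (hdiam : ∀ a ∈ K, ∀ b ∈ K, ‖a - b‖ ≤ M) (hTK : MapsTo T K K) (hUK : MapsTo U K K)
    (hT : ∀ a ∈ K, ∀ b ∈ K, ‖T a - T b‖ ≤ ‖a - b‖) (hU : ∀ a ∈ K, ∀ b ∈ K, ‖U a - U b‖ ≤ ‖a - b‖)
    (hu : u ∈ K) (hα : ∀ n, α n ∈ Icc (0 : ℝ) 1) (hβ : ∀ n, β n ∈ Icc (0 : ℝ) 1)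
    (hαs : ¬ Summable α) (hα' : Summable fun n => |α (n + 1) - α n|)
    (hβ' : Summable fun n => |β (n + 1) - β n|) (hx0 : x 0 ∈ K)
    (hy : ∀ n, y n = (1 - α n) • T (x n) + α n • u)
    (hx : ∀ n, x (n + 1) = (1 - β n) • U (y n) + β n • y n) :
    Tendsto (fun n => ‖x (n + 1) - x n‖) atTop (𝓝 0) ∧
      Tendsto (fun n => ‖y (n + 1) - y n‖) atTop (𝓝 0) := by
  have hxyK := halpernMann_mem hK hTK hUK hu hα hβ hx0 hy hx
  have hM : 0 ≤ M := (norm_nonneg _).trans (hdiam u hu u hu)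
  have hyd (n : ℕ) : ‖y (n + 1) - y n‖ ≤
      (1 - α (n + 1)) * ‖x (n + 1) - x n‖ + |α (n + 1) - α n| * M := by
    rw [hy (n + 1), hy n]
    exact norm_halpern_sub_halpern_le (hα _) (hT _ (hxyK _).1 _ (hxyK n).1)
      (hdiam _ hu _ (hTK (hxyK n).1))
  have hxd (n : ℕ) : ‖x (n + 1 + 1) - x (n + 1)‖ ≤ ‖y (n + 1) - y n‖ + |β (n + 1) - β n| * M := by
    rw [hx (n + 1), hx n]
    exact norm_mann_sub_mann_le (hβ _) (hU _ (hxyK _).2 _ (hxyK n).2)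
      (hdiam _ (hxyK n).2 _ (hUK (hxyK n).2))
  have hxlim : Tendsto (fun n => ‖x (n + 1) - x n‖) atTop (𝓝 0) :=
    tendsto_zero_of_succ_le_one_sub_mul_add (fun n => norm_nonneg _) (fun n => (hα _).1)
      (fun n => (hα _).2) ((summable_nat_add_iff 1).not.2 hαs) (fun n => by positivity)
      ((hα'.mul_right M).add (hβ'.mul_right M)) fun n => by linarith [hxd n, hyd n]
  refine ⟨hxlim, squeeze_zero (g := fun n => ‖x (n + 1) - x n‖ + |α (n + 1) - α n| * M)
    (fun n => norm_nonneg _) (fun n => (hyd n).trans ?_) ?_⟩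
  · nlinarith [(hα (n + 1)).1, norm_nonneg (x (n + 1) - x n)]
  · simpa using hxlim.add (hα'.tendsto_atTop_zero.mul_const M)

end HalpernMann

theorem ahm_asymptotic_regularity_general {X : Type*} [NormedAddCommGroup X] [NormedSpace ℝ X]
    (C : Set X) (hC : Convex ℝ C) (T U : X → X)
    (hTC : Set.MapsTo T C C) (hUC : Set.MapsTo U C C)
    (hT : ∀ a ∈ C, ∀ b ∈ C, ‖T a - T b‖ ≤ ‖a - b‖)
    (hU : ∀ a ∈ C, ∀ b ∈ C, ‖U a - U b‖ ≤ ‖a - b‖)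
    (u : X) (hu : u ∈ C)
    (α β : ℕ → ℝ) (hα : ∀ n, α n ∈ Set.Icc (0:ℝ) 1) (hβ : ∀ n, β n ∈ Set.Icc (0:ℝ) 1)
    (x y : ℕ → X) (hx0 : x 0 ∈ C)
    (hy : ∀ n, y n = (1 - α n) • T (x n) + α n • u)
    (hx : ∀ n, x (n + 1) = (1 - β n) • U (y n) + β n • y n)
    (p : X) (hp : p ∈ C) (hTp : T p = p) (hUp : U p = p)
    (hαdiv : Filter.Tendsto (fun n => ∑ i ∈ Finset.range n, α i) Filter.atTop Filter.atTop)
    (hα3 : Summable (fun n => |α (n + 1) - α n|))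
    (hβ4 : Summable (fun n => |β (n + 1) - β n|)) :
    Filter.Tendsto (fun n => ‖x (n + 1) - x n‖) Filter.atTop (nhds 0) ∧
      Filter.Tendsto (fun n => ‖y (n + 1) - y n‖) Filter.atTop (nhds 0) := by
  set r := max (dist (x 0) p) (dist u p)
  have hTK := (LipschitzOnWith.mk_one (by simpa only [dist_eq_norm] using hT))
    |>.mapsTo_inter_closedBall hTC hp hTp r
  have hUK := (LipschitzOnWith.mk_one (by simpa only [dist_eq_norm] using hU))
    |>.mapsTo_inter_closedBall hUC hp hUp r
  have hdiam : ∀ a ∈ C ∩ closedBall p r, ∀ b ∈ C ∩ closedBall p r, ‖a - b‖ ≤ 2 * r :=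
    fun a ha b hb => by
      rw [← dist_eq_norm]
      linarith [dist_triangle_right a b p, mem_closedBall.1 ha.2, mem_closedBall.1 hb.2]
  have hαs : ¬ Summable α :=
    (not_summable_iff_tendsto_nat_atTop_of_nonneg fun n => (hα n).1).2 hαdiv
  exact halpernMann_tendsto_norm_succ_sub (hC.inter (convex_closedBall p r)) hdiam hTK hUK
    (fun a ha b hb => hT a ha.1 b hb.1) (fun a ha b hb => hU a ha.1 b hb.1)
    ⟨hu, mem_closedBall.2 (le_max_right _ _)⟩ hα hβ hαs hα3 hβ4
    ⟨hx0, mem_closedBall.2 (le_max_left _ _)⟩ hy hx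

theorem ahm_asymptotic_regularity {X : Type*} [NormedAddCommGroup X] [NormedSpace ℝ X]
    (C : Set X) (hC : Convex ℝ C) (T U : X → X)
    (hTC : Set.MapsTo T C C) (hUC : Set.MapsTo U C C)
    (hT : ∀ a ∈ C, ∀ b ∈ C, ‖T a - T b‖ ≤ ‖a - b‖)
    (hU : ∀ a ∈ C, ∀ b ∈ C, ‖U a - U b‖ ≤ ‖a - b‖)
    (u : X) (hu : u ∈ C)
    (α β : ℕ → ℝ) (hα : ∀ n, α n ∈ Set.Icc (0:ℝ) 1) (hβ : ∀ n, β n ∈ Set.Icc (0:ℝ) 1)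
    (x y : ℕ → X) (hx0 : x 0 ∈ C)
    (hy : ∀ n, y n = (1 - α n) • T (x n) + α n • u)
    (hx : ∀ n, x (n + 1) = (1 - β n) • U (y n) + β n • y n)
    (p : X) (hp : p ∈ C) (hTp : T p = p) (hUp : U p = p)
    (hα0 : Filter.Tendsto α Filter.atTop (nhds 0))
    (hαdiv : Filter.Tendsto (fun n => ∑ i ∈ Finset.range n, α i) Filter.atTop Filter.atTop)
    (hα3 : Summable (fun n => |α (n + 1) - α n|))
    (hβ4 : Summable (fun n => |β (n + 1) - β n|)) :
    Filter.Tendsto (fun n => ‖x (n + 1) - x n‖) Filter.atTop (nhds 0) ∧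
      Filter.Tendsto (fun n => ‖y (n + 1) - y n‖) Filter.atTop (nhds 0) :=
  ahm_asymptotic_regularity_general C hC T U hTC hUC hT hU u hu α β hα hβ x y hx0 hy hx p hp hTp hUp
    hαdiv hα3 hβ4
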